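/- Let A₀ := [[2,0,−1,3],[0,0,−2,6],[−1,−2,1,2],[3,6,2,4]], B₀ := diag(2,−1,−2,0) and W₀ := [[0,−15,−24,10],[15,0,−36,−2],[24,36,0,53],[−10,2,−53,0]] (so A₀, B₀ ∈ S⁴ and W₀ ∈ K⁴). Then trace(A₀·W₀·B₀·W₀ᵀ) < −(19/2)·‖W₀‖_F², and for every nonzero symmetric matrix U ∈ S⁴ one has trace(A₀·U·B₀·U) > −(19/2)·‖U‖_F². Consequently, for every U ∈ S⁴ with ‖U‖_F = 1, ‖W₀‖_F⁻²·trace(A₀·W₀·B₀·W₀ᵀ) < trace(A₀·U·B₀·U). -/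

import Mathlib

open Matrix

noncomputable def frobNorm {n : ℕ} (M : Matrix (Fin n) (Fin n) ℝ) : ℝ :=
  Real.sqrt (Mᵀ * M).trace

def A₀ : Matrix (Fin 4) (Fin 4) ℝ :=
  !![2, 0, -1, 3; 0, 0, -2, 6; -1, -2, 1, 2; 3, 6, 2, 4]

def B₀ : Matrix (Fin 4) (Fin 4) ℝ :=
  !![2, 0, 0, 0; 0, -1, 0, 0; 0, 0, -2, 0; 0, 0, 0, 0]

def W₀ : Matrix (Fin 4) (Fin 4) ℝ :=
  !![0, -15, -24, 10; 15, 0, -36, -2; 24, 36, 0, 53; -10, 2, -53, 0]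

/-!
For `W₀` everything is a computation: `‖W₀‖_F² = 10020` and `trace (A₀ W₀ B₀ W₀ᵀ) = -95230`,
which is below `-(19/2) · 10020 = -95190`.

On symmetric matrices the quadratic form `U ↦ trace (A₀ U B₀ U) + (19/2) ‖U‖_F²` is positive
definite, with least eigenvalue (relative to `‖U‖_F²`) only about `0.0015`. Completing squares
along an `LDLᵀ` factorisation of its Gram matrix in the ten upper-triangular entries of `U`
writes it as a positive multiple of `‖U‖_F²` plus a nonnegative combination of squares.

The last claim follows: `‖W₀‖_F⁻² · trace (A₀ W₀ B₀ W₀ᵀ) < -19/2 < trace (A₀ U B₀ U)`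
when `‖U‖_F = 1`.
-/

lemma trace_transpose_mul_self_nonneg {m n : Type*} [Fintype m] [Fintype n]
    (M : Matrix m n ℝ) : 0 ≤ (Mᵀ * M).trace := by
  simpa using (posSemidef_conjTranspose_mul_self M).trace_nonneg

lemma frobNorm_sq {n : ℕ} (M : Matrix (Fin n) (Fin n) ℝ) : frobNorm M ^ 2 = (Mᵀ * M).trace :=
  Real.sq_sqrt (trace_transpose_mul_self_nonneg M)

lemma frobNorm_pos {n : ℕ} {M : Matrix (Fin n) (Fin n) ℝ} (hM : M ≠ 0) : 0 < frobNorm M := by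
  refine Real.sqrt_pos.mpr ((trace_transpose_mul_self_nonneg M).lt_of_ne' ?_)
  simpa using mt (trace_conjTranspose_mul_self_eq_zero_iff (A := M)).mp hM

lemma frobNorm_W₀_sq : frobNorm W₀ ^ 2 = 10020 := by
  rw [frobNorm_sq]
  simp only [trace, diag, mul_apply, transpose_apply, Fin.sum_univ_four]
  norm_num [W₀, cons_val_two, cons_val_three, vecHead, vecTail]

lemma trace_A₀_mul_W₀_mul_B₀_mul_transpose_W₀ : (A₀ * W₀ * B₀ * W₀ᵀ).trace = -95230 := by
  simp only [trace, diag, mul_apply, transpose_apply, Fin.sum_univ_four]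
  norm_num [A₀, B₀, W₀, cons_val_two, cons_val_three, vecHead, vecTail]

lemma neg_mul_frobNorm_sq_lt_trace_A₀_mul_mul_B₀_mul {U : Matrix (Fin 4) (Fin 4) ℝ}
    (hU : Uᵀ = U) (hU0 : U ≠ 0) :
    -(19 / 2) * frobNorm U ^ 2 < (A₀ * U * B₀ * U).trace := by
  have hN := pow_pos (frobNorm_pos hU0) 2
  rw [frobNorm_sq, hU] at hN ⊢
  have hsymm : ∀ i j, U j i = U i j := fun i j => congrFun (congrFun hU i) j
  simp only [trace, diag, mul_apply, Fin.sum_univ_four,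
    hsymm 0 1, hsymm 0 2, hsymm 0 3, hsymm 1 2, hsymm 1 3, hsymm 2 3] at hN ⊢
  norm_num [A₀, B₀, cons_val_two, cons_val_three, vecHead, vecTail] at hN ⊢
  -- The `LDLᵀ` squares, except that the last, nearly singular `2 × 2` step is covered by
  -- `(17 U₀₂ - 33 U₀₁)²`, `U₀₂²`, `U₀₁²`; `linarith` finds the multipliers.
  linarith [sq_nonneg (U 3 3), sq_nonneg (U 0 1), sq_nonneg (U 0 2),
    sq_nonneg (17 * U 0 2 - 33 * U 0 1),
    sq_nonneg (6649 * U 1 1 + 1400 * U 1 2 - 4200 * U 1 3),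
    sq_nonneg (9449 * U 0 0 - 1400 * U 0 2 + 4200 * U 0 3),
    sq_nonneg (1400 * U 0 2 + 2800 * U 1 2 + 5249 * U 2 2 - 2800 * U 2 3),
    sq_nonneg (-9062900 * U 0 2 - 18125800 * U 1 2 + 16283401 * U 2 3),
    sq_nonneg (-6981450 * U 0 1 - 1714300 * U 1 2 + 26080601 * U 1 3),
    sq_nonneg (39685800 * U 0 1 + 16168600 * U 0 2 + 80463601 * U 0 3),
    sq_nonneg (119327943490385350 * U 0 1 - 974794280708220000 * U 0 2 +
      655685184256332299 * U 1 2)]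

theorem stmt_14 :
    (A₀ * W₀ * B₀ * W₀ᵀ).trace < -(19 / 2) * (frobNorm W₀) ^ 2 ∧
    (∀ U : Matrix (Fin 4) (Fin 4) ℝ, Uᵀ = U → U ≠ 0 →
      -(19 / 2) * (frobNorm U) ^ 2 < (A₀ * U * B₀ * U).trace) ∧
    (∀ U : Matrix (Fin 4) (Fin 4) ℝ, Uᵀ = U → frobNorm U = 1 →
      ((frobNorm W₀) ^ 2)⁻¹ * (A₀ * W₀ * B₀ * W₀ᵀ).trace < (A₀ * U * B₀ * U).trace) := by
  rw [frobNorm_W₀_sq, trace_A₀_mul_W₀_mul_B₀_mul_transpose_W₀]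
  refine ⟨by norm_num, fun U hU hU0 => neg_mul_frobNorm_sq_lt_trace_A₀_mul_mul_B₀_mul hU hU0,
    fun U hU hU1 => ?_⟩
  have hU0 : U ≠ 0 := by
    rintro rfl
    simp [frobNorm] at hU1
  have hlt := neg_mul_frobNorm_sq_lt_trace_A₀_mul_mul_B₀_mul hU hU0
  rw [hU1] at hlt
  norm_num at hlt ⊢
  linarith
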